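/- Let n ≥ 2, 1 ≤ l < n, and 0 < p < 1, and set p' = 2p(1−p). Let F be a random function from {0,1}^n to {0,1} on a probability space S such that the family (F(·)(x))_{x ∈ {0,1}^n} is 4-wise independent with P(F(·)(x) = 1) = p for every x. If C(n,l)·2^{2l−1} < 2^{n−l}·p', where C(n,l) is the binomial coefficient, then there exists a sample point s ∈ S such that the function F(s) : {0,1}^n → {0,1} is l-mixed. -/

import Mathlib

/-!
Fix a set `V` of `l` variables and two distinct assignments `T ≠ T'` to it. The subfunctions
they define coincide only if `F (T ∪ U) = F (T' ∪ U)` for all `2^(n-l)` assignments `U` to the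
remaining variables. The events `F (T ∪ U) ≠ F (T' ∪ U)` each have probability
`p' = 2p(1-p)` and, the points involved being distinct, 4-wise independence makes them pairwise
independent; the second moment method then bounds the probability that none occurs by
`1 / (2^(n-l) p')`. A union bound over the `C(n,l)` sets `V` and the at most `2^(2l-1)`
unordered pairs `{T, T'}` leaves a sample point at which `F` is `l`-mixed.
-/

open MeasureTheory

/-- A function `f : {0,1}^n → {0,1}` is `r`-mixed if for every set `V` of `r`
variables, the `2^r` assignments of constants to the variables in `V` lead to
pairwise distinct subfunctions of the remaining variables. -/
def IsMixed (n r : ℕ) (f : (Fin n → Bool) → Bool) : Prop :=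
  ∀ V : Finset (Fin n), V.card = r →
    ∀ a a' : Fin n → Bool, (∃ i ∈ V, a i ≠ a' i) →
      (fun z : Fin n → Bool => f (fun i => if i ∈ V then a i else z i)) ≠
      (fun z : Fin n → Bool => f (fun i => if i ∈ V then a' i else z i))

open Finset

section SecondMoment

variable {Ω ι : Type*} {A : ι → Set Ω}

lemma sq_sum_indicator_one (Z : Finset ι) (ω : Ω) :
    (∑ i ∈ Z, (A i).indicator (1 : Ω → ℝ) ω) ^ 2 =
      ∑ i ∈ Z, ∑ j ∈ Z, (A i ∩ A j).indicator 1 ω := by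
  simp only [sq, sum_mul_sum, Set.inter_indicator_one, Pi.mul_apply]

variable [MeasurableSpace Ω] {μ : Measure Ω}

lemma integrable_sum_indicator_one [IsFiniteMeasure μ] (hA : ∀ i, MeasurableSet (A i))
    (Z : Finset ι) : Integrable (fun ω => ∑ i ∈ Z, (A i).indicator (1 : Ω → ℝ) ω) μ :=
  integrable_finsetSum _ fun i _ => (integrable_const 1).indicator (hA i)

lemma integral_sum_indicator_one [IsFiniteMeasure μ] (hA : ∀ i, MeasurableSet (A i))
    (Z : Finset ι) : ∫ ω, ∑ i ∈ Z, (A i).indicator (1 : Ω → ℝ) ω ∂μ = ∑ i ∈ Z, μ.real (A i) := by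
  rw [integral_finsetSum _ fun i _ => (integrable_const 1).indicator (hA i)]
  exact sum_congr rfl fun i _ => integral_indicator_one (hA i)

lemma integral_sq_sum_indicator_one_le [IsFiniteMeasure μ] (hA : ∀ i, MeasurableSet (A i))
    (Z : Finset ι) {q : ℝ} (h1 : ∀ i ∈ Z, μ.real (A i) = q)
    (h2 : ∀ i ∈ Z, ∀ j ∈ Z, i ≠ j → μ.real (A i ∩ A j) ≤ q ^ 2) :
    ∫ ω, (∑ i ∈ Z, (A i).indicator (1 : Ω → ℝ) ω) ^ 2 ∂μ ≤ #Z * q + (#Z * q) ^ 2 := by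
  classical
  simp only [sq_sum_indicator_one]
  rw [integral_finsetSum _ fun i _ =>
    integrable_sum_indicator_one (fun j => (hA i).inter (hA j)) Z]
  calc ∑ i ∈ Z, ∫ ω, ∑ j ∈ Z, (A i ∩ A j).indicator 1 ω ∂μ
      ≤ ∑ _i ∈ Z, (q + #Z * q ^ 2) := by
        refine sum_le_sum fun i hi => ?_
        rw [integral_sum_indicator_one (fun j => (hA i).inter (hA j)), ← add_sum_erase _ _ hi,
          Set.inter_self, h1 i hi]
        gcongr
        calc ∑ j ∈ Z.erase i, μ.real (A i ∩ A j)
            ≤ #(Z.erase i) • q ^ 2 := sum_le_card_nsmul _ _ _ fun j hj =>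
              h2 i hi j (mem_of_mem_erase hj) (ne_of_mem_erase hj).symm
          _ ≤ #Z * q ^ 2 := by
              rw [nsmul_eq_mul]; gcongr; exact erase_subset i Z
    _ = #Z * q + (#Z * q) ^ 2 := by simp only [sum_const, nsmul_eq_mul]; ring

/-- Chebyshev's inequality at `N = 0`: `P(N = 0) * E² ≤ Var N ≤ E`. -/
lemma measureReal_mul_le_one_of_integral_sq_le [IsProbabilityMeasure μ] {N : Ω → ℝ}
    (hN : Integrable N μ) (hN2 : Integrable (fun ω => N ω ^ 2) μ) {E : ℝ}
    (hmean : ∫ ω, N ω ∂μ = E) (hsecond : ∫ ω, N ω ^ 2 ∂μ ≤ E + E ^ 2) {B : Set Ω}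
    (hB : MeasurableSet B) (hNB : ∀ ω ∈ B, N ω = 0) : μ.real B * E ≤ 1 := by
  have hexp : (fun ω => (N ω - E) ^ 2) = fun ω => N ω ^ 2 - 2 * E * N ω + E ^ 2 := by
    ext; ring
  have hlin : Integrable (fun ω => N ω ^ 2 - 2 * E * N ω) μ := hN2.sub (hN.const_mul _)
  have hvar : ∫ ω, (N ω - E) ^ 2 ∂μ ≤ E := by
    rw [hexp, integral_add hlin (integrable_const _), integral_sub hN2 (hN.const_mul _),
      integral_const_mul, hmean, integral_const, probReal_univ, one_smul]
    linarith
  have hcheb : μ.real B * E ^ 2 ≤ ∫ ω, (N ω - E) ^ 2 ∂μ := by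
    rw [← smul_eq_mul, ← integral_indicator_const _ hB]
    refine integral_mono ((integrable_const _).indicator hB)
      (by rw [hexp]; exact hlin.add (integrable_const _)) fun ω => ?_
    by_cases hω : ω ∈ B
    · simp [Set.indicator_of_mem hω, hNB ω hω]
    · simp only [Set.indicator_of_notMem hω]
      positivity
  rcases le_or_gt E 0 with hE | hE
  · nlinarith [measureReal_nonneg (μ := μ) (s := B)]
  · exact le_of_mul_le_mul_right (by nlinarith) hE

/-- The second moment method, applied to the number `N` of events `A i` that occur. -/
theorem measureReal_iInter_compl_mul_le [IsProbabilityMeasure μ]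
    (hA : ∀ i, MeasurableSet (A i)) (Z : Finset ι) {q : ℝ}
    (h1 : ∀ i ∈ Z, μ.real (A i) = q)
    (h2 : ∀ i ∈ Z, ∀ j ∈ Z, i ≠ j → μ.real (A i ∩ A j) ≤ q ^ 2) :
    μ.real (⋂ i ∈ Z, (A i)ᶜ) * (#Z * q) ≤ 1 := by
  refine measureReal_mul_le_one_of_integral_sq_le (integrable_sum_indicator_one hA Z) ?_
    (by rw [integral_sum_indicator_one hA, sum_congr rfl h1, sum_const, nsmul_eq_mul])
    (integral_sq_sum_indicator_one_le hA Z h1 h2)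
    (Finset.measurableSet_biInter Z fun i _ => (hA i).compl) fun ω hω =>
      sum_eq_zero fun i hi => Set.indicator_of_notMem (Set.mem_iInter₂.1 hω i hi) _
  simp only [sq_sum_indicator_one]
  exact integrable_finsetSum _ fun i _ =>
    integrable_sum_indicator_one (fun j => (hA i).inter (hA j)) Z

end SecondMoment

def bernoulliMass (p : ℝ) (b : Bool) : ℝ := if b then p else 1 - p

def FourWiseIndepFun {Ω ι : Type*} [MeasurableSpace Ω] (μ : Measure Ω) (X : ι → Ω → Bool) :
    Prop :=
  ∀ x₁ x₂ x₃ x₄ : ι, x₁ ≠ x₂ → x₁ ≠ x₃ → x₁ ≠ x₄ → x₂ ≠ x₃ → x₂ ≠ x₄ → x₃ ≠ x₄ →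
    ∀ l₁ l₂ l₃ l₄ : Bool,
      μ.real {s | X x₁ s = l₁ ∧ X x₂ s = l₂ ∧ X x₃ s = l₃ ∧ X x₄ s = l₄} =
        μ.real {s | X x₁ s = l₁} * μ.real {s | X x₂ s = l₂} *
          μ.real {s | X x₃ s = l₃} * μ.real {s | X x₄ s = l₄}

section FourWise

variable {Ω ι : Type*} [MeasurableSpace Ω] {μ : Measure Ω} {X : ι → Ω → Bool}

theorem FourWiseIndepFun.comp {κ : Type*} (hind : FourWiseIndepFun μ X) {g : κ → ι}
    (hg : Function.Injective g) : FourWiseIndepFun μ fun j => X (g j) :=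
  fun _ _ _ _ h₁₂ h₁₃ h₁₄ h₂₃ h₂₄ h₃₄ =>
    hind _ _ _ _ (hg.ne h₁₂) (hg.ne h₁₃) (hg.ne h₁₄) (hg.ne h₂₃) (hg.ne h₂₄) (hg.ne h₃₄)

variable [IsProbabilityMeasure μ] {p : ℝ}

lemma measureReal_eq_bernoulliMass (hX : ∀ x, Measurable (X x))
    (hbias : ∀ x, μ.real {s | X x s = true} = p) (x : ι) (b : Bool) :
    μ.real {s | X x s = b} = bernoulliMass p b := by
  cases b
  · have hcompl : {s | X x s = false} = {s | X x s = true}ᶜ := by ext; simp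
    rw [hcompl, probReal_compl_eq_one_sub (measurableSet_eq_fun (hX x) measurable_const), hbias]
    rfl
  · exact hbias x

lemma measureReal_preimage_eq_sum_bernoulliMass (hX : ∀ x, Measurable (X x))
    (hbias : ∀ x, μ.real {s | X x s = true} = p) (hind : FourWiseIndepFun μ X)
    {x₁ x₂ x₃ x₄ : ι} (h₁₂ : x₁ ≠ x₂) (h₁₃ : x₁ ≠ x₃) (h₁₄ : x₁ ≠ x₄) (h₂₃ : x₂ ≠ x₃)
    (h₂₄ : x₂ ≠ x₄) (h₃₄ : x₃ ≠ x₄) (S : Finset (Bool × Bool × Bool × Bool)) :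
    μ.real ((fun s => (X x₁ s, X x₂ s, X x₃ s, X x₄ s)) ⁻¹' S) =
      ∑ t ∈ S, bernoulliMass p t.1 * bernoulliMass p t.2.1 * bernoulliMass p t.2.2.1 *
        bernoulliMass p t.2.2.2 := by
  have hmeas : Measurable fun s => (X x₁ s, X x₂ s, X x₃ s, X x₄ s) :=
    (hX x₁).prodMk ((hX x₂).prodMk ((hX x₃).prodMk (hX x₄)))
  rw [← sum_measureReal_preimage_singleton S fun t _ => hmeas (measurableSet_singleton t)]
  refine sum_congr rfl fun ⟨l₁, l₂, l₃, l₄⟩ _ => ?_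
  have hfiber : (fun s => (X x₁ s, X x₂ s, X x₃ s, X x₄ s)) ⁻¹' {(l₁, l₂, l₃, l₄)} =
      {s | X x₁ s = l₁ ∧ X x₂ s = l₂ ∧ X x₃ s = l₃ ∧ X x₄ s = l₄} := by ext; simp
  simp only [hfiber, hind _ _ _ _ h₁₂ h₁₃ h₁₄ h₂₃ h₂₄ h₃₄,
    measureReal_eq_bernoulliMass hX hbias]

lemma exists_pair_ne_ne_of_four_le_card [Fintype ι] (h4 : 4 ≤ Fintype.card ι) (x y : ι) :
    ∃ u v, u ≠ v ∧ x ≠ u ∧ x ≠ v ∧ y ≠ u ∧ y ≠ v := by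
  classical
  have hcard : 1 < #({x, y}ᶜ : Finset ι) := by
    rw [card_compl]; have := card_le_two (a := x) (b := y); omega
  obtain ⟨u, hu, v, hv, huv⟩ := one_lt_card.1 hcard
  simp only [mem_compl, mem_insert, mem_singleton, not_or] at hu hv
  exact ⟨u, v, huv, Ne.symm hu.1, Ne.symm hv.1, Ne.symm hu.2, Ne.symm hv.2⟩

theorem measureReal_ne_eq [Fintype ι] (h4 : 4 ≤ Fintype.card ι) (hX : ∀ x, Measurable (X x))
    (hbias : ∀ x, μ.real {s | X x s = true} = p) (hind : FourWiseIndepFun μ X)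
    {x y : ι} (hxy : x ≠ y) : μ.real {s | X x s ≠ X y s} = 2 * p * (1 - p) := by
  classical
  -- 4-wise independence only speaks about four distinct points, so pad `x, y` with two more.
  obtain ⟨u, v, huv, hxu, hxv, hyu, hyv⟩ := exists_pair_ne_ne_of_four_le_card h4 x y
  have hset : {s | X x s ≠ X y s} = (fun s => (X x s, X y s, X u s, X v s)) ⁻¹'
      ↑(univ.filter fun t : Bool × Bool × Bool × Bool => t.1 ≠ t.2.1) := by ext; simp
  rw [hset, measureReal_preimage_eq_sum_bernoulliMass hX hbias hind hxy hxu hxv hyu hyv huv]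
  simp [sum_filter, Fintype.sum_prod_type, bernoulliMass]
  ring

theorem measureReal_ne_inter_ne (hX : ∀ x, Measurable (X x))
    (hbias : ∀ x, μ.real {s | X x s = true} = p) (hind : FourWiseIndepFun μ X)
    {x₁ x₂ x₃ x₄ : ι} (h₁₂ : x₁ ≠ x₂) (h₁₃ : x₁ ≠ x₃) (h₁₄ : x₁ ≠ x₄) (h₂₃ : x₂ ≠ x₃)
    (h₂₄ : x₂ ≠ x₄) (h₃₄ : x₃ ≠ x₄) :
    μ.real ({s | X x₁ s ≠ X x₂ s} ∩ {s | X x₃ s ≠ X x₄ s}) = (2 * p * (1 - p)) ^ 2 := by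
  classical
  have hset : {s | X x₁ s ≠ X x₂ s} ∩ {s | X x₃ s ≠ X x₄ s} =
      (fun s => (X x₁ s, X x₂ s, X x₃ s, X x₄ s)) ⁻¹'
        ↑(univ.filter fun t : Bool × Bool × Bool × Bool => t.1 ≠ t.2.1 ∧ t.2.2.1 ≠ t.2.2.2) := by
    ext; simp
  rw [hset, measureReal_preimage_eq_sum_bernoulliMass hX hbias hind h₁₂ h₁₃ h₁₄ h₂₃ h₂₄ h₃₄]
  simp [sum_filter, Fintype.sum_prod_type, bernoulliMass]
  ring

theorem measureReal_forall_eq_mul_le [Fintype ι] (h4 : 4 ≤ Fintype.card ι)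
    (hX : ∀ x, Measurable (X x)) (hbias : ∀ x, μ.real {s | X x s = true} = p)
    (hind : FourWiseIndepFun μ X) {κ : Type*} (Z : Finset κ) (x y : κ → ι)
    (hxy : ∀ z ∈ Z, x z ≠ y z)
    (hdisj : (Z : Set κ).PairwiseDisjoint fun z => ({x z, y z} : Set ι)) :
    μ.real {s | ∀ z ∈ Z, X (x z) s = X (y z) s} * (#Z * (2 * p * (1 - p))) ≤ 1 := by
  have hset : {s | ∀ z ∈ Z, X (x z) s = X (y z) s} = ⋂ z ∈ Z, {s | X (x z) s ≠ X (y z) s}ᶜ := by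
    ext; simp
  rw [hset]
  refine measureReal_iInter_compl_mul_le
    (fun z => (measurableSet_eq_fun (hX _) (hX _)).compl) Z
    (fun z hz => measureReal_ne_eq h4 hX hbias hind (hxy z hz)) fun z hz w hw hzw => ?_
  have hne := hdisj hz hw hzw
  simp only [Set.disjoint_insert_left, Set.disjoint_insert_right, Set.disjoint_singleton,
    Set.mem_insert_iff, Set.mem_singleton_iff, not_or] at hne
  obtain ⟨⟨h₃₁, h₃₂⟩, h₁₄, h₂₄⟩ := hne
  exact (measureReal_ne_inter_ne hX hbias hind (hxy z hz) (Ne.symm h₃₁) h₁₄ (Ne.symm h₃₂) h₂₄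
    (hxy w hw)).le

end FourWise

lemma Nat.choose_two_two_pow_le (l : ℕ) : (2 ^ l).choose 2 ≤ 2 ^ (2 * l - 1) := by
  rw [Nat.choose_two_right]
  refine Nat.div_le_of_le_mul ?_
  calc 2 ^ l * (2 ^ l - 1) ≤ 2 ^ l * 2 ^ l := Nat.mul_le_mul_left _ (Nat.sub_le _ _)
    _ = 2 ^ (2 * l) := by rw [← pow_add, two_mul]
    _ ≤ 2 ^ (2 * l - 1 + 1) := Nat.pow_le_pow_right two_pos (by omega)
    _ = 2 * 2 ^ (2 * l - 1) := by rw [pow_succ, mul_comm]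

theorem exists_forall_notMem_of_measureReal_mul_le_one {Ω κ : Type*} [MeasurableSpace Ω]
    {μ : Measure Ω} [IsProbabilityMeasure μ] (I : Finset κ) (B : κ → Set Ω) {m : ℝ}
    (hB : ∀ t ∈ I, μ.real (B t) * m ≤ 1) (hI : #I < m) : ∃ s, ∀ t ∈ I, s ∉ B t := by
  by_contra! hcover
  have hunion : ⋃ t ∈ I, B t = Set.univ :=
    Set.eq_univ_of_forall fun s => by simpa using hcover s
  have hm : 0 < m := (Nat.cast_nonneg _).trans_lt hI
  have : m ≤ #I := calc
    m = μ.real (⋃ t ∈ I, B t) * m := by rw [hunion, probReal_univ, one_mul]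
    _ ≤ (∑ t ∈ I, μ.real (B t)) * m :=
      mul_le_mul_of_nonneg_right (measureReal_biUnion_finset_le I B) hm.le
    _ ≤ ∑ _t ∈ I, (1 : ℝ) := by rw [sum_mul]; exact sum_le_sum hB
    _ = #I := by simp
  linarith

section Cube

variable {α : Type*} [Fintype α] [DecidableEq α]

lemma union_eq_union_iff_of_subset_compl {V T T' U U' : Finset α} (hT : T ⊆ V) (hT' : T' ⊆ V)
    (hU : U ⊆ Vᶜ) (hU' : U' ⊆ Vᶜ) : T ∪ U = T' ∪ U' ↔ T = T' ∧ U = U' := by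
  simp only [Finset.ext_iff, subset_iff, mem_union, mem_compl] at *
  grind

variable {Ω : Type*} [MeasurableSpace Ω] {μ : Measure Ω} [IsProbabilityMeasure μ]
  {X : Finset α → Ω → Bool} {p : ℝ}

theorem measureReal_forall_union_eq_mul_le (hα : 2 ≤ Fintype.card α)
    (hX : ∀ x, Measurable (X x)) (hbias : ∀ x, μ.real {s | X x s = true} = p)
    (hind : FourWiseIndepFun μ X) {V T T' : Finset α} (hT : T ⊆ V) (hT' : T' ⊆ V)
    (hTT' : T ≠ T') :
    μ.real {s | ∀ U ⊆ Vᶜ, X (T ∪ U) s = X (T' ∪ U) s} *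
      (2 ^ (Fintype.card α - #V) * (2 * p * (1 - p))) ≤ 1 := by
  have h4 : 4 ≤ Fintype.card (Finset α) := by
    rw [Fintype.card_finset]
    calc 4 = 2 ^ 2 := rfl
      _ ≤ 2 ^ Fintype.card α := Nat.pow_le_pow_right two_pos hα
  have hmain := measureReal_forall_eq_mul_le h4 hX hbias hind Vᶜ.powerset (T ∪ ·) (T' ∪ ·)
    (fun U hU h => hTT' ((union_eq_union_iff_of_subset_compl hT hT' (mem_powerset.1 hU)
      (mem_powerset.1 hU)).1 h).1)
    (fun U hU U' hU' hUU' => ?_)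
  · simpa [card_compl] using hmain
  · have hsep {W W'} (hW : W ⊆ V) (hW' : W' ⊆ V) : W ∪ U ≠ W' ∪ U' := fun h =>
      hUU' ((union_eq_union_iff_of_subset_compl hW hW' (mem_powerset.1 hU)
        (mem_powerset.1 hU')).1 h).2
    refine Set.disjoint_left.2 ?_
    rintro _ (rfl | rfl) (h | h)
    exacts [hsep hT hT h, hsep hT hT' h, hsep hT' hT h, hsep hT' hT' h]

theorem exists_forall_exists_union_ne (hα : 2 ≤ Fintype.card α)
    (hX : ∀ x, Measurable (X x)) (hbias : ∀ x, μ.real {s | X x s = true} = p)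
    (hind : FourWiseIndepFun μ X) {l : ℕ}
    (hsize : ((Fintype.card α).choose l : ℝ) * 2 ^ (2 * l - 1) <
      2 ^ (Fintype.card α - l) * (2 * p * (1 - p))) :
    ∃ s, ∀ V : Finset α, #V = l → ∀ T ⊆ V, ∀ T' ⊆ V, T ≠ T' →
      ∃ U ⊆ Vᶜ, X (T ∪ U) s ≠ X (T' ∪ U) s := by
  let pairs (V : Finset α) : Finset (Sym2 (Finset α)) :=
    V.powerset.offDiag.image Sym2.mk.uncurry
  let bad (t : Σ _ : Finset α, Sym2 (Finset α)) : Set Ω :=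
    Sym2.lift ⟨fun T T' => {s | ∀ U ⊆ t.1ᶜ, X (T ∪ U) s = X (T' ∪ U) s},
      fun T T' => by simp only [eq_comm]⟩ t.2
  have hcard :
      #((powersetCard l univ).sigma pairs) ≤ (Fintype.card α).choose l * 2 ^ (2 * l - 1) := by
    rw [card_sigma]
    calc ∑ V ∈ powersetCard l univ, #(pairs V)
        = ∑ _V ∈ powersetCard l (univ : Finset α), (2 ^ l).choose 2 :=
          sum_congr rfl fun V hV => by
            rw [Sym2.card_image_offDiag, card_powerset, (mem_powersetCard.1 hV).2]
      _ ≤ _ := by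
          rw [sum_const, card_powersetCard, card_univ, smul_eq_mul]
          exact Nat.mul_le_mul_left _ (Nat.choose_two_two_pow_le l)
  have hbad : ∀ t ∈ (powersetCard l univ).sigma pairs,
      μ.real (bad t) * (2 ^ (Fintype.card α - l) * (2 * p * (1 - p))) ≤ 1 := by
    rintro ⟨V, e⟩ ht
    simp only [mem_sigma, mem_powersetCard, pairs, mem_image, mem_offDiag] at ht
    obtain ⟨⟨-, rfl⟩, ⟨T, T'⟩, ⟨hT, hT', hTT'⟩, rfl⟩ := ht
    exact measureReal_forall_union_eq_mul_le hα hX hbias hind (mem_powerset.1 hT)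
      (mem_powerset.1 hT') hTT'
  obtain ⟨s, hs⟩ := exists_forall_notMem_of_measureReal_mul_le_one _ bad hbad
    (lt_of_le_of_lt (by exact_mod_cast hcard) hsize)
  refine ⟨s, fun V hV T hT T' hT' hTT' => ?_⟩
  have hmem : (⟨V, s(T, T')⟩ : Σ _ : Finset α, Sym2 (Finset α)) ∈
      (powersetCard l univ).sigma pairs := by
    simp only [mem_sigma, mem_powersetCard, pairs, mem_image, mem_offDiag]
    exact ⟨⟨subset_univ V, hV⟩, (T, T'), ⟨mem_powerset.2 hT, mem_powerset.2 hT', hTT'⟩, rfl⟩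
  simpa [bad] using hs _ hmem

end Cube

lemma isMixed_of_forall_exists_union_ne {n r : ℕ} {f : (Fin n → Bool) → Bool}
    (h : ∀ V : Finset (Fin n), #V = r → ∀ T ⊆ V, ∀ T' ⊆ V, T ≠ T' →
      ∃ U ⊆ Vᶜ, f (fun i => decide (i ∈ T ∪ U)) ≠ f (fun i => decide (i ∈ T' ∪ U))) :
    IsMixed n r f := by
  intro V hV a a' ⟨i, hiV, hai⟩ hsub
  have hpiece (b : Fin n → Bool) (U : Finset (Fin n)) (hU : U ⊆ Vᶜ) :
      (fun j => if j ∈ V then b j else decide (j ∈ U)) =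
        fun j => decide (j ∈ V.filter (b · = true) ∪ U) := by
    ext j
    by_cases hj : j ∈ V
    · have : j ∉ U := fun hjU => mem_compl.1 (hU hjU) hj
      simp [hj, this]
    · simp [hj]
  set T := V.filter (a · = true)
  set T' := V.filter (a' · = true)
  have hTT' : T ≠ T' := by
    intro heq
    have hiff := congrArg (i ∈ ·) heq
    simp only [T, T', mem_filter, hiV, true_and, eq_iff_iff] at hiff
    exact hai (Bool.eq_iff_iff.2 hiff)
  obtain ⟨U, hU, hne⟩ := h V hV T (filter_subset _ V) T' (filter_subset _ V) hTT'
  have hagree := congrFun hsub fun j => decide (j ∈ U)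
  beta_reduce at hagree
  rw [hpiece a U hU, hpiece a' U hU] at hagree
  exact hne hagree

theorem stmt_11_general {Ω : Type*} [MeasurableSpace Ω] (μ : Measure Ω)
    [IsProbabilityMeasure μ]
    (n l : ℕ) (hn : 2 ≤ n)
    (p : ℝ)
    (F : Ω → (Fin n → Bool) → Bool)
    (hmeas : ∀ x, Measurable (fun s => F s x))
    (hbias : ∀ x, (μ {s | F s x = true}).toReal = p)
    (hind : ∀ x₁ x₂ x₃ x₄ : Fin n → Bool,
      x₁ ≠ x₂ → x₁ ≠ x₃ → x₁ ≠ x₄ → x₂ ≠ x₃ → x₂ ≠ x₄ → x₃ ≠ x₄ →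
      ∀ l₁ l₂ l₃ l₄ : Bool,
        (μ {s | F s x₁ = l₁ ∧ F s x₂ = l₂ ∧ F s x₃ = l₃ ∧ F s x₄ = l₄}).toReal =
          (μ {s | F s x₁ = l₁}).toReal * (μ {s | F s x₂ = l₂}).toReal *
          (μ {s | F s x₃ = l₃}).toReal * (μ {s | F s x₄ = l₄}).toReal)
    (hsize : (n.choose l : ℝ) * 2 ^ (2 * l - 1) <
      2 ^ (n - l) * (2 * p * (1 - p))) :
    ∃ s : Ω, IsMixed n l (F s) := by
  have hbits : Function.Injective fun (S : Finset (Fin n)) (i : Fin n) => decide (i ∈ S) :=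
    fun S S' h => Finset.ext fun i => by simpa using congrFun h i
  have hindF : FourWiseIndepFun μ fun x s => F s x := hind
  obtain ⟨s, hs⟩ := exists_forall_exists_union_ne (μ := μ)
    (X := fun S s => F s fun i => decide (i ∈ S)) (by simpa using hn) (fun S => hmeas _)
    (fun S => hbias _) (hindF.comp hbits) (by simpa using hsize)
  exact ⟨s, isMixed_of_forall_exists_union_ne (hs ·)⟩

/-- For a random function `F : {0,1}^n → {0,1}` whose values are
4-wise independent with one-probability `p`, if `C(n,l)·2^{2l−1} < 2^{n−l}·p'`
with `p' = 2p(1−p)`, then some sample point `s` yields an `l`-mixed function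
`F s`. -/
theorem stmt_11 {Ω : Type*} [MeasurableSpace Ω] (μ : Measure Ω)
    [IsProbabilityMeasure μ]
    (n l : ℕ) (hn : 2 ≤ n) (hl : 1 ≤ l) (hln : l < n)
    (p : ℝ) (hp0 : 0 < p) (hp1 : p < 1)
    (F : Ω → (Fin n → Bool) → Bool)
    (hmeas : ∀ x, Measurable (fun s => F s x))
    (hbias : ∀ x, (μ {s | F s x = true}).toReal = p)
    (hind : ∀ x₁ x₂ x₃ x₄ : Fin n → Bool,
      x₁ ≠ x₂ → x₁ ≠ x₃ → x₁ ≠ x₄ → x₂ ≠ x₃ → x₂ ≠ x₄ → x₃ ≠ x₄ →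
      ∀ l₁ l₂ l₃ l₄ : Bool,
        (μ {s | F s x₁ = l₁ ∧ F s x₂ = l₂ ∧ F s x₃ = l₃ ∧ F s x₄ = l₄}).toReal =
          (μ {s | F s x₁ = l₁}).toReal * (μ {s | F s x₂ = l₂}).toReal *
          (μ {s | F s x₃ = l₃}).toReal * (μ {s | F s x₄ = l₄}).toReal)
    (hsize : (n.choose l : ℝ) * 2 ^ (2 * l - 1) <
      2 ^ (n - l) * (2 * p * (1 - p))) :
    ∃ s : Ω, IsMixed n l (F s) :=
  stmt_11_general μ n l hn p F hmeas hbias hind hsize
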